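/- arXiv:1305.7349 — 5 statements merged into one kernel-verified Lean document; each statement's English description precedes it below -/
import Mathlib

section
/- Let v(x,t) = (1/2) xᵀQx + m t be a polynomial on ℝⁿ × ℝ⁻ with Q a symmetric n×n matrix and m = tr Q (so v is caloric), where Q is block diagonal with A a diagonal k×k block and B a positive semi-definite (n−k)×(n−k) block. If tr A = tr B = m = 0 and ∫_{S₁} v·(Σᵢ₌₁ᵏ qᵢᵢ xᵢ²) dγ̄ ≤ 0 where qᵢᵢ are the diagonal entries of A, then A = 0 and hence v = 0. -/
/-!
Being positive semidefinite with zero trace, the block `B` vanishes, so `v = ½ P` with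
`P(x) = ∑_{i<k} qᵢᵢ xᵢ²` and the hypothesis reads `½ ∫ P² dγ̄ ≤ 0`. The one-dimensional moments
`∫ x⁴ e^{-bx²} = 3/(4b²) √(π/b)` and `∫ x² e^{-bx²} = 1/(2b) √(π/b)`, taken at `b = 1/(4(-t))`, give
`∫ P(x)² Ḡ(x,t) dx = 4 cₙ (4π)^{n/2} ((∑ qᵢᵢ)² + 2 ∑ qᵢᵢ²) (-t)`, which is positive unless
every `qᵢᵢ` vanishes.
-/

open MeasureTheory Set Real

/-- The weighted measure density `Ḡ(x,t) = G(x,-t)/(-t)` where `G` is the backward heat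
kernel. -/
noncomputable def barHeatKernel (n : ℕ) (cn : ℝ)
    (x : EuclideanSpace ℝ (Fin n)) (t : ℝ) : ℝ :=
  cn * (-t) ^ (-(n:ℝ)/2) * Real.exp (‖x‖ ^ 2 / (4 * t)) / (-t)

section GaussianMoments

variable {b : ℝ} (hb : 0 < b)
include hb

theorem integrable_pow_mul_exp_neg_mul_sq (p : ℕ) :
    Integrable fun x : ℝ => x ^ p * exp (-b * x ^ 2) := by
  simpa using integrable_rpow_mul_exp_neg_mul_sq hb (s := p) (by linarith [p.cast_nonneg (α := ℝ)])

theorem integral_pow_add_two_mul_exp_neg_mul_sq (p : ℕ) :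
    ∫ x : ℝ, x ^ (p + 2) * exp (-b * x ^ 2)
      = (p + 1) / (2 * b) * ∫ x : ℝ, x ^ p * exp (-b * x ^ 2) := by
  have hderiv (x : ℝ) : HasDerivAt (fun x => x ^ (p + 1) * exp (-b * x ^ 2))
      ((p + 1) * (x ^ p * exp (-b * x ^ 2)) - 2 * b * (x ^ (p + 2) * exp (-b * x ^ 2))) x := by
    refine ((hasDerivAt_pow (p + 1) x).mul ((hasDerivAt_pow 2 x).const_mul (-b)).exp).congr_deriv ?_
    push_cast
    ring
  have h := integral_eq_zero_of_hasDerivAt_of_integrable hderiv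
    (((integrable_pow_mul_exp_neg_mul_sq hb p).const_mul _).sub
      ((integrable_pow_mul_exp_neg_mul_sq hb (p + 2)).const_mul _))
    (integrable_pow_mul_exp_neg_mul_sq hb (p + 1))
  rw [integral_sub ((integrable_pow_mul_exp_neg_mul_sq hb p).const_mul _)
    ((integrable_pow_mul_exp_neg_mul_sq hb (p + 2)).const_mul _),
    integral_const_mul, integral_const_mul, sub_eq_zero] at h
  rw [div_mul_eq_mul_div, eq_div_iff (by positivity)]
  linarith

theorem integral_sq_mul_exp_neg_mul_sq :
    ∫ x : ℝ, x ^ 2 * exp (-b * x ^ 2) = 1 / (2 * b) * √(π / b) := by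
  simp only [integral_pow_add_two_mul_exp_neg_mul_sq hb 0, pow_zero, one_mul, integral_gaussian]
  norm_num

theorem integral_pow_four_mul_exp_neg_mul_sq :
    ∫ x : ℝ, x ^ 4 * exp (-b * x ^ 2) = 3 / (4 * b ^ 2) * √(π / b) := by
  rw [integral_pow_add_two_mul_exp_neg_mul_sq hb 2, integral_sq_mul_exp_neg_mul_sq hb]
  field_simp
  norm_num

end GaussianMoments

section ProductGaussian

variable {ι : Type*} [Fintype ι] {b : ℝ}

theorem prod_mul_exp_neg_mul_sum_sq (f : ι → ℝ → ℝ) (y : ι → ℝ) :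
    (∏ m, f m (y m)) * exp (-b * ∑ m, y m ^ 2) = ∏ m, f m (y m) * exp (-b * y m ^ 2) := by
  rw [Finset.mul_sum, exp_sum, Finset.prod_mul_distrib]

theorem integrable_prod_mul_exp_neg_mul_sum_sq (f : ι → ℝ → ℝ)
    (hf : ∀ m, Integrable fun z => f m z * exp (-b * z ^ 2)) :
    Integrable fun y : ι → ℝ => (∏ m, f m (y m)) * exp (-b * ∑ m, y m ^ 2) := by
  simp only [prod_mul_exp_neg_mul_sum_sq]
  exact Integrable.fintype_prod hf

theorem integral_prod_mul_exp_neg_mul_sum_sq (f : ι → ℝ → ℝ) (c : ι → ℝ)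
    (hf : ∀ m, ∫ z, f m z * exp (-b * z ^ 2) = c m * √(π / b)) :
    ∫ y : ι → ℝ, (∏ m, f m (y m)) * exp (-b * ∑ m, y m ^ 2)
      = (∏ m, c m) * √(π / b) ^ Fintype.card ι := by
  simp only [prod_mul_exp_neg_mul_sum_sq]
  rw [integral_fintype_prod_volume_eq_prod (fun m z => f m z * exp (-b * z ^ 2))]
  simp only [hf, Finset.prod_mul_distrib, Finset.prod_const, Finset.card_univ]

variable [DecidableEq ι]

theorem prod_ite_sq_mul_ite_sq (i l : ι) (y : ι → ℝ) :
    ∏ m, (if m = i then y m ^ 2 else 1) * (if m = l then y m ^ 2 else 1) = y i ^ 2 * y l ^ 2 := by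
  rw [Finset.prod_mul_distrib, Fintype.prod_ite_eq', Fintype.prod_ite_eq']

variable (hb : 0 < b)
include hb

theorem integrable_sq_mul_sq_mul_exp_neg_mul_sum_sq (i l : ι) :
    Integrable fun y : ι → ℝ => y i ^ 2 * y l ^ 2 * exp (-b * ∑ m, y m ^ 2) := by
  simp only [← prod_ite_sq_mul_ite_sq i l]
  refine integrable_prod_mul_exp_neg_mul_sum_sq
    (fun m z => (if m = i then z ^ 2 else 1) * (if m = l then z ^ 2 else 1)) fun m => ?_
  refine (integrable_pow_mul_exp_neg_mul_sq hb
    ((if m = i then 2 else 0) + (if m = l then 2 else 0))).congr (ae_of_all _ fun z => ?_)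
  split_ifs <;> beta_reduce <;> ring

theorem integral_sq_mul_sq_mul_exp_neg_mul_sum_sq (i l : ι) :
    ∫ y : ι → ℝ, y i ^ 2 * y l ^ 2 * exp (-b * ∑ m, y m ^ 2)
      = (if i = l then 3 else 1) / (4 * b ^ 2) * √(π / b) ^ Fintype.card ι := by
  simp only [← prod_ite_sq_mul_ite_sq i l]
  set f : ι → ℝ → ℝ := fun m z => (if m = i then z ^ 2 else 1) * (if m = l then z ^ 2 else 1)
  rcases eq_or_ne i l with rfl | hil
  · refine (integral_prod_mul_exp_neg_mul_sum_sq f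
      (fun m => if m = i then 3 / (4 * b ^ 2) else 1) fun m => ?_).trans ?_
    · rcases eq_or_ne m i with rfl | hi
      · simpa [f, ← pow_add] using integral_pow_four_mul_exp_neg_mul_sq hb
      · simpa [f, hi] using integral_gaussian b
    · rw [Fintype.prod_ite_eq', if_pos rfl]
  · refine (integral_prod_mul_exp_neg_mul_sum_sq f
      (fun m => (if m = i then 1 / (2 * b) else 1) * (if m = l then 1 / (2 * b) else 1))
      fun m => ?_).trans ?_
    · rcases eq_or_ne m i with rfl | hi
      · simpa [f, hil] using integral_sq_mul_exp_neg_mul_sq hb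
      rcases eq_or_ne m l with rfl | hl
      · simpa [f, hi] using integral_sq_mul_exp_neg_mul_sq hb
      · simpa [f, hi, hl] using integral_gaussian b
    · rw [Finset.prod_mul_distrib, Fintype.prod_ite_eq', Fintype.prod_ite_eq', if_neg hil]
      field_simp
      ring

theorem integral_sq_sum_mul_sq_mul_exp_neg_mul_sum_sq (S : Finset ι) (q : ι → ℝ) :
    ∫ y : ι → ℝ, (∑ i ∈ S, q i * y i ^ 2) ^ 2 * exp (-b * ∑ m, y m ^ 2)
      = ((∑ i ∈ S, q i) ^ 2 + 2 * ∑ i ∈ S, q i ^ 2) / (4 * b ^ 2)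
        * √(π / b) ^ Fintype.card ι := by
  have hexpand (y : ι → ℝ) : (∑ i ∈ S, q i * y i ^ 2) ^ 2 * exp (-b * ∑ m, y m ^ 2)
      = ∑ i ∈ S, ∑ l ∈ S, q i * q l * (y i ^ 2 * y l ^ 2 * exp (-b * ∑ m, y m ^ 2)) := by
    rw [sq, Finset.sum_mul_sum, Finset.sum_mul]
    refine Finset.sum_congr rfl fun i _ => ?_
    rw [Finset.sum_mul]
    exact Finset.sum_congr rfl fun l _ => by ring
  have hint (i l : ι) := (integrable_sq_mul_sq_mul_exp_neg_mul_sum_sq hb i l).const_mul (q i * q l)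
  simp only [hexpand]
  rw [integral_finsetSum _ fun i _ => integrable_finsetSum _ fun l _ => hint i l]
  simp only [integral_finsetSum _ fun l _ => hint _ l, integral_const_mul,
    integral_sq_mul_sq_mul_exp_neg_mul_sum_sq hb]
  have hcoeff (i l : ι) :
      q i * q l * ((if i = l then 3 else 1) / (4 * b ^ 2) * √(π / b) ^ Fintype.card ι)
        = (q i * q l + 2 * if i = l then q i * q l else 0) / (4 * b ^ 2)
          * √(π / b) ^ Fintype.card ι := by
    split_ifs <;> ring
  simp only [hcoeff, ← Finset.sum_div, ← Finset.sum_mul, Finset.sum_add_distrib, ← Finset.mul_sum,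
    Finset.sum_ite_eq, Finset.sum_ite_of_true fun _ h => h]
  simp only [sq]

end ProductGaussian

theorem integral_sq_sum_mul_sq_mul_barHeatKernel {n : ℕ} (cn : ℝ) (S : Finset (Fin n))
    (q : Fin n → ℝ) {t : ℝ} (ht : t ≤ 0) :
    ∫ x : EuclideanSpace ℝ (Fin n), (∑ i ∈ S, q i * x i ^ 2) ^ 2 * barHeatKernel n cn x t
      = 4 * cn * √(4 * π) ^ n * ((∑ i ∈ S, q i) ^ 2 + 2 * ∑ i ∈ S, q i ^ 2) * -t := by
  obtain rfl | ht := ht.eq_or_lt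
  · simp [barHeatKernel]
  set s := -t with hs_def
  have hs : 0 < s := neg_pos.mpr ht
  have hb : 0 < (4 * s)⁻¹ := by positivity
  have hkernel (x : EuclideanSpace ℝ (Fin n)) :
      barHeatKernel n cn x t = cn * (√s ^ n)⁻¹ / s * exp (-(4 * s)⁻¹ * ∑ i, x i ^ 2) := by
    rw [barHeatKernel, ← hs_def, neg_div, rpow_neg hs.le, rpow_div_two_eq_sqrt _ hs.le,
      rpow_natCast, ← EuclideanSpace.real_norm_sq_eq, hs_def]
    field_simp
  simp only [hkernel, mul_left_comm _ (cn * _ / s), integral_const_mul]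
  have hpi := (EuclideanSpace.volume_preserving_symm_measurableEquiv_toLp (Fin n)).integral_comp'
    fun y => (∑ i ∈ S, q i * y i ^ 2) ^ 2 * exp (-(4 * s)⁻¹ * ∑ i, y i ^ 2)
  simp only [MeasurableEquiv.coe_toLp_symm] at hpi
  rw [hpi, integral_sq_sum_mul_sq_mul_exp_neg_mul_sum_sq hb, Fintype.card_fin,
    show π / (4 * s)⁻¹ = 4 * π * s by field_simp, sqrt_mul (by positivity), mul_pow]
  field_simp

theorem setIntegral_Ioc_integral_sq_sum_mul_sq_mul_barHeatKernel {n : ℕ} (cn : ℝ)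
    (S : Finset (Fin n)) (q : Fin n → ℝ) :
    ∫ t in Ioc (-1 : ℝ) 0, ∫ x : EuclideanSpace ℝ (Fin n),
        (∑ i ∈ S, q i * x i ^ 2) ^ 2 * barHeatKernel n cn x t
      = 2 * cn * √(4 * π) ^ n * ((∑ i ∈ S, q i) ^ 2 + 2 * ∑ i ∈ S, q i ^ 2) := by
  rw [setIntegral_congr_fun measurableSet_Ioc
    fun t ht => integral_sq_sum_mul_sq_mul_barHeatKernel cn S q ht.2, integral_const_mul,
    ← intervalIntegral.integral_of_le (by norm_num), intervalIntegral.integral_neg, integral_id]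
  ring

section QuadraticForms

open Matrix

theorem dotProduct_mulVec_self_eq_sum_sum {ι : Type*} [Fintype ι] (M : Matrix ι ι ℝ)
    (w : ι → ℝ) : w ⬝ᵥ (M *ᵥ w) = ∑ i, ∑ j, M i j * w i * w j := by
  simp only [dotProduct, mulVec, Finset.mul_sum]
  exact Finset.sum_congr rfl fun i _ => Finset.sum_congr rfl fun j _ => by ring

theorem apply_eq_zero_of_sum_sum_nonneg_of_sum_diag_eq_zero {ι : Type*} [Fintype ι]
    [DecidableEq ι] {M : Matrix ι ι ℝ} (hM : M.IsSymm) (p : ι → Prop) [DecidablePred p]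
    (hpsd : ∀ w : ι → ℝ, (∀ i, p i → w i = 0) → 0 ≤ ∑ i, ∑ j, M i j * w i * w j)
    (htr : ∑ i ∈ Finset.univ.filter (fun i => ¬ p i), M i i = 0) {i j : ι}
    (hi : ¬ p i) (hj : ¬ p j) : M i j = 0 := by
  set D : Matrix ι ι ℝ := diagonal fun i => if p i then 0 else 1
  have hD : (D * M * D).PosSemidef := by
    refine .of_dotProduct_mulVec_nonneg ?_ fun w => ?_
    · simpa [D] using isHermitian_conjTranspose_mul_mul D (isHermitian_iff_isSymm.mpr hM)
    · have hDw : w ᵥ* D = D *ᵥ w := by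
        ext i
        simp [D, vecMul_diagonal, mulVec_diagonal, mul_comm]
      rw [star_trivial, ← mulVec_mulVec, ← mulVec_mulVec, dotProduct_mulVec, hDw,
        dotProduct_mulVec_self_eq_sum_sum]
      exact hpsd (D *ᵥ w) fun i hi => by simp [D, mulVec_diagonal, hi]
  have htrace : (D * M * D).trace = 0 := by
    rw [← htr, Finset.sum_filter]
    refine Finset.sum_congr rfl fun i _ => ?_
    by_cases hi : p i <;> simp [D, hi]
  simpa [D, hi, hj] using congrFun₂ (hD.trace_eq_zero_iff.mp htrace) i j

theorem sum_sum_mul_mul_eq_sum_diag {ι : Type*} [Fintype ι] {M : ι → ι → ℝ} (S : Finset ι)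
    (hoff : ∀ i j, i ≠ j → M i j = 0) (hdiag : ∀ i ∉ S, M i i = 0) (x : ι → ℝ) :
    ∑ i, ∑ j, M i j * x i * x j = ∑ i ∈ S, M i i * x i ^ 2 := by
  have hrow (i : ι) : ∑ j, M i j * x i * x j = M i i * x i ^ 2 := by
    rw [Finset.sum_eq_single i (fun j _ hji => by rw [hoff i j hji.symm, zero_mul, zero_mul])
      (fun h => absurd (Finset.mem_univ i) h), sq, mul_assoc]
  rw [Finset.sum_congr rfl fun i _ => hrow i]
  exact (Finset.sum_subset (Finset.subset_univ S) fun i _ hi => by rw [hdiag i hi, zero_mul]).symm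

theorem sum_sum_mul_mul_eq_sum_filter_diag {ι : Type*} [Fintype ι] [DecidableEq ι]
    {M : Matrix ι ι ℝ} (hM : M.IsSymm) (p : ι → Prop) [DecidablePred p]
    (hblock : ∀ i j, i ≠ j → p i ∨ p j → M i j = 0)
    (hpsd : ∀ w : ι → ℝ, (∀ i, p i → w i = 0) → 0 ≤ ∑ i, ∑ j, M i j * w i * w j)
    (htr : ∑ i ∈ Finset.univ.filter (fun i => ¬ p i), M i i = 0) (x : ι → ℝ) :
    ∑ i, ∑ j, M i j * x i * x j = ∑ i ∈ Finset.univ.filter p, M i i * x i ^ 2 := by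
  have hB {i j : ι} (hi : ¬ p i) (hj : ¬ p j) : M i j = 0 :=
    apply_eq_zero_of_sum_sum_nonneg_of_sum_diag_eq_zero hM p hpsd htr hi hj
  refine sum_sum_mul_mul_eq_sum_diag _ (fun i j hij => ?_)
    (fun i hi => hB (by simpa using hi) (by simpa using hi)) x
  by_cases h : p i ∨ p j
  · exact hblock i j hij h
  · exact hB (fun hi => h (.inl hi)) (fun hj => h (.inr hj))

end QuadraticForms

theorem eq_zero_of_sq_sum_add_two_mul_sum_sq_nonpos {ι : Type*} {S : Finset ι} {q : ι → ℝ}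
    (h : (∑ i ∈ S, q i) ^ 2 + 2 * ∑ i ∈ S, q i ^ 2 ≤ 0) {i : ι} (hi : i ∈ S) : q i = 0 := by
  have hsq : ∑ i ∈ S, q i ^ 2 = 0 :=
    le_antisymm (by nlinarith [sq_nonneg (∑ i ∈ S, q i)]) (Finset.sum_nonneg fun i _ => sq_nonneg _)
  exact pow_eq_zero_iff two_ne_zero |>.mp <|
    (Finset.sum_eq_zero_iff_of_nonneg fun i _ => sq_nonneg (q i)).mp hsq i hi

theorem singular_blowup_vanishes_general (n k : ℕ) (cn : ℝ) (hcn : 0 < cn)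
    (Q : Matrix (Fin n) (Fin n) ℝ) (m : ℝ)
    (hsym : Q.IsSymm)
    (hblock : ∀ i j : Fin n, i ≠ j → ((i:ℕ) < k ∨ (j:ℕ) < k) → Q i j = 0)
    (hBpsd : ∀ w : Fin n → ℝ, (∀ i : Fin n, (i:ℕ) < k → w i = 0) →
      0 ≤ ∑ i, ∑ j, Q i j * w i * w j)
    (htrB : ∑ i ∈ Finset.univ.filter (fun i : Fin n => ¬ (i:ℕ) < k), Q i i = 0)
    (hm0 : m = 0)
    (v : EuclideanSpace ℝ (Fin n) → ℝ → ℝ)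
    (hv : ∀ x t, v x t = (1/2) * (∑ i, ∑ j, Q i j * x i * x j) + m * t)
    (hint : (∫ t in Ioc (-1:ℝ) 0, ∫ x : EuclideanSpace ℝ (Fin n),
        v x t * (∑ i ∈ Finset.univ.filter (fun i : Fin n => (i:ℕ) < k),
          Q i i * (x i) ^ 2) * barHeatKernel n cn x t) ≤ 0) :
    (∀ i : Fin n, (i:ℕ) < k → Q i i = 0) ∧ (∀ x t, v x t = 0) := by
  set S := Finset.univ.filter fun i : Fin n => (i : ℕ) < k
  have hv' (x : EuclideanSpace ℝ (Fin n)) (t : ℝ) : v x t = 1 / 2 * ∑ i ∈ S, Q i i * x i ^ 2 := by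
    rw [hv, hm0, zero_mul, add_zero,
      sum_sum_mul_mul_eq_sum_filter_diag hsym _ hblock hBpsd htrB]
  have hintegrand (t : ℝ) (x : EuclideanSpace ℝ (Fin n)) :
      v x t * (∑ i ∈ S, Q i i * x i ^ 2) * barHeatKernel n cn x t
        = 1 / 2 * ((∑ i ∈ S, Q i i * x i ^ 2) ^ 2 * barHeatKernel n cn x t) := by
    rw [hv']
    ring
  simp only [hintegrand, integral_const_mul,
    setIntegral_Ioc_integral_sq_sum_mul_sq_mul_barHeatKernel] at hint
  have hR : (∑ i ∈ S, Q i i) ^ 2 + 2 * ∑ i ∈ S, Q i i ^ 2 ≤ 0 :=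
    nonpos_of_mul_nonpos_right (by linarith) (by positivity : 0 < 2 * cn * √(4 * π) ^ n)
  have hA {i : Fin n} (hi : i ∈ S) : Q i i = 0 :=
    eq_zero_of_sq_sum_add_two_mul_sum_sq_nonpos (q := fun i => Q i i) hR hi
  refine ⟨fun i hi => hA (by simpa [S] using hi), fun x t => ?_⟩
  rw [hv', Finset.sum_eq_zero fun i hi => by rw [hA hi, zero_mul], mul_zero]

/-- Let `v(x,t) = ½ xᵀQx + mt` be caloric (`m = tr Q`), with `Q` symmetric and block
diagonal: a diagonal `k×k` block `A` and a positive semi-definite block `B` on the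
remaining indices.  If `tr A = tr B = m = 0` and
`∫_{S₁} v ⬝ (Σ_{i<k} qᵢᵢ xᵢ²) dγ̄ ≤ 0`, then `A = 0` and hence `v = 0`. -/
theorem singular_blowup_vanishes (n k : ℕ) (hk : k ≤ n) (cn : ℝ) (hcn : 0 < cn)
    (Q : Matrix (Fin n) (Fin n) ℝ) (m : ℝ)
    (hsym : Q.IsSymm)
    (hblock : ∀ i j : Fin n, i ≠ j → ((i:ℕ) < k ∨ (j:ℕ) < k) → Q i j = 0)
    (hBpsd : ∀ w : Fin n → ℝ, (∀ i : Fin n, (i:ℕ) < k → w i = 0) →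
      0 ≤ ∑ i, ∑ j, Q i j * w i * w j)
    (hm : m = Matrix.trace Q)
    (htrA : ∑ i ∈ Finset.univ.filter (fun i : Fin n => (i:ℕ) < k), Q i i = 0)
    (htrB : ∑ i ∈ Finset.univ.filter (fun i : Fin n => ¬ (i:ℕ) < k), Q i i = 0)
    (hm0 : m = 0)
    (v : EuclideanSpace ℝ (Fin n) → ℝ → ℝ)
    (hv : ∀ x t, v x t = (1/2) * (∑ i, ∑ j, Q i j * x i * x j) + m * t)
    (hint : (∫ t in Ioc (-1:ℝ) 0, ∫ x : EuclideanSpace ℝ (Fin n),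
        v x t * (∑ i ∈ Finset.univ.filter (fun i : Fin n => (i:ℕ) < k),
          Q i i * (x i) ^ 2) * barHeatKernel n cn x t) ≤ 0) :
    (∀ i : Fin n, (i:ℕ) < k → Q i i = 0) ∧ (∀ x t, v x t = 0) :=
  singular_blowup_vanishes_general n k cn hcn Q m hsym hblock hBpsd htrB hm0 v hv hint
end

section
/- Let Y be the closure of C₀^∞(ℝⁿ) with respect to the norm ‖φ‖_Y = ‖φ/G(·,1)‖_{L^∞} + ‖∇φ/√(G(·,1))‖_{L²}. If u = ∇·v + w (distributionally) with v ∈ L²_{γ^{-1}}(ℝⁿ;ℝⁿ) and w ∈ L¹_{γ^{-1}}(ℝⁿ), then u defines a bounded linear functional on Y with ‖u‖_{Y'} ≤ ‖v‖_{L²_{γ^{-1}}} + ‖w‖_{L¹_{γ^{-1}}}. -/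
open MeasureTheory

/-- If `u = ∇·v + w` distributionally, with `v ∈ L²_{γ^{-1}}` and `w ∈ L¹_{γ^{-1}}`,
then `u` is bounded on the space `Y`: for any test function `φ` with
`|φ| ≤ A G(·,1)` and `(∫ |∇φ|²/G(·,1))^{1/2} ≤ B`, the pairing
`⟨φ,u⟩ = ⟨−∇φ,v⟩ + ⟨φ,w⟩` satisfies `|⟨φ,u⟩| ≤ (A+B)(‖v‖_{L²_{γ^{-1}}} + ‖w‖_{L¹_{γ^{-1}}})`. -/
theorem dual_Y_estimate (n : ℕ) (cn : ℝ) (hcn : 0 < cn)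
    (v : EuclideanSpace ℝ (Fin n) → EuclideanSpace ℝ (Fin n))
    (w φ : EuclideanSpace ℝ (Fin n) → ℝ)
    (hφ : ContDiff ℝ (⊤ : ℕ∞) φ) (hφc : HasCompactSupport φ)
    (hv : Integrable (fun x => ‖v x‖ ^ 2 * (cn * Real.exp (-‖x‖ ^ 2 / 4))))
    (hw : Integrable (fun x => |w x| * (cn * Real.exp (-‖x‖ ^ 2 / 4))))
    (A B : ℝ) (hA0 : 0 ≤ A) (hB0 : 0 ≤ B)
    (hA : ∀ x, |φ x| ≤ A * (cn * Real.exp (-‖x‖ ^ 2 / 4)))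
    (hB : (∫ x, (∑ i, (fderiv ℝ φ x (EuclideanSpace.single i 1)) ^ 2) /
        (cn * Real.exp (-‖x‖ ^ 2 / 4))) ≤ B ^ 2) :
    |∫ x, (-(∑ i, fderiv ℝ φ x (EuclideanSpace.single i 1) * v x i) + φ x * w x)| ≤
      (A + B) * (Real.sqrt (∫ x, ‖v x‖ ^ 2 * (cn * Real.exp (-‖x‖ ^ 2 / 4)))
        + ∫ x, |w x| * (cn * Real.exp (-‖x‖ ^ 2 / 4))) := by
  set G : EuclideanSpace ℝ (Fin n) → ℝ := fun x => cn * Real.exp (-‖x‖ ^ 2 / 4) with hG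
  have hGpos : ∀ x, 0 < G x := fun x => mul_pos hcn (Real.exp_pos _)
  have hGc : Continuous G := continuous_const.mul
    ((continuous_norm.pow 2).neg.div_const 4).rexp
  -- nonnegativity of the two RHS terms
  have hS0 : 0 ≤ Real.sqrt (∫ x, ‖v x‖ ^ 2 * G x) := Real.sqrt_nonneg _
  have hW0 : 0 ≤ ∫ x, |w x| * G x :=
    integral_nonneg fun x => mul_nonneg (abs_nonneg _) (hGpos x).le
  set S := Real.sqrt (∫ x, ‖v x‖ ^ 2 * G x) with hSdef
  set W := ∫ x, |w x| * G x with hWdef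
  by_cases hfi : Integrable (fun x =>
      (-(∑ i, fderiv ℝ φ x (EuclideanSpace.single i 1) * v x i) + φ x * w x))
  swap
  · rw [integral_undef hfi]
    simpa using mul_nonneg (add_nonneg hA0 hB0) (add_nonneg hS0 hW0)
  -- the gradient magnitude
  set a : EuclideanSpace ℝ (Fin n) → ℝ :=
    fun x => Real.sqrt (∑ i, (fderiv ℝ φ x (EuclideanSpace.single i 1)) ^ 2) with ha
  have hfd : Continuous (fderiv ℝ φ) := (hφ.continuous_fderiv (by simp))
  have hac : Continuous a := by
    apply Real.continuous_sqrt.comp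
    exact continuous_finset_sum _ fun i _ => (hfd.clm_apply continuous_const).pow 2
  have hacs : HasCompactSupport a := by
    have h1 : HasCompactSupport (fderiv ℝ φ) := hφc.fderiv ℝ
    have : a = (fun (L : EuclideanSpace ℝ (Fin n) →L[ℝ] ℝ) =>
        Real.sqrt (∑ i, (L (EuclideanSpace.single i 1)) ^ 2)) ∘ (fderiv ℝ φ) := rfl
    rw [this]
    exact h1.comp_left (by simp)
  have ha_nonneg : ∀ x, 0 ≤ a x := fun x => Real.sqrt_nonneg _
  have ha_sq : ∀ x, a x ^ 2 = ∑ i, (fderiv ℝ φ x (EuclideanSpace.single i 1)) ^ 2 :=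
    fun x => Real.sq_sqrt (Finset.sum_nonneg fun i _ => sq_nonneg _)
  -- g1 = a / √G, g2 = ‖v‖ √G
  set g1 : EuclideanSpace ℝ (Fin n) → ℝ := fun x => a x / Real.sqrt (G x) with hg1def
  set g2 : EuclideanSpace ℝ (Fin n) → ℝ := fun x => ‖v x‖ * Real.sqrt (G x) with hg2def
  have hg1c : Continuous g1 := hac.div (Real.continuous_sqrt.comp hGc)
    (fun x => (Real.sqrt_pos.2 (hGpos x)).ne')
  have hg1cs : HasCompactSupport g1 := by
    apply HasCompactSupport.mono hacs
    intro x hx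
    simp only [hg1def] at hx
    intro h0
    exact hx (by simp [h0])
  have hg1mem : MemLp g1 2 (volume : Measure (EuclideanSpace ℝ (Fin n))) :=
    hg1c.memLp_of_hasCompactSupport hg1cs
  have hg1sq : ∀ x, g1 x ^ 2 = (∑ i, (fderiv ℝ φ x (EuclideanSpace.single i 1)) ^ 2) / G x := by
    intro x
    simp only [hg1def, div_pow, ha_sq, Real.sq_sqrt (hGpos x).le]
  -- measurability of ‖v‖ and |w|
  have hvm : AEStronglyMeasurable (fun x => ‖v x‖)
      (volume : Measure (EuclideanSpace ℝ (Fin n))) := by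
    have h1 : AEStronglyMeasurable (fun x => ‖v x‖ ^ 2 * G x) volume := hv.1
    have h2 : AEStronglyMeasurable (fun x => ‖v x‖ ^ 2) volume := by
      have hm : AEMeasurable (fun x => (‖v x‖ ^ 2 * G x) * (G x)⁻¹) volume :=
        h1.aemeasurable.mul (hGc.measurable.inv.aemeasurable)
      refine hm.aestronglyMeasurable.congr (Filter.Eventually.of_forall fun x => ?_)
      exact mul_inv_cancel_right₀ (hGpos x).ne' _
    have : (fun x => ‖v x‖) = fun x => Real.sqrt (‖v x‖ ^ 2) := by
      funext x; rw [Real.sqrt_sq (norm_nonneg _)]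
    rw [this]
    exact Real.continuous_sqrt.comp_aestronglyMeasurable h2
  have hg2mem : MemLp g2 2 (volume : Measure (EuclideanSpace ℝ (Fin n))) := by
    have hg2m : AEStronglyMeasurable g2 volume :=
      hvm.mul ((Real.continuous_sqrt.comp hGc).aestronglyMeasurable)
    rw [memLp_two_iff_integrable_sq hg2m]
    refine hv.congr (Filter.Eventually.of_forall fun x => ?_)
    simp only [hg2def, mul_pow, Real.sq_sqrt (hGpos x).le]
    rfl
  -- the dominating functions and their integrability
  have hT1 : Integrable (fun x => g1 x * g2 x)
      (volume : Measure (EuclideanSpace ℝ (Fin n))) := by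
    rw [← memLp_one_iff_integrable]
    have := hg2mem.smul (φ := g1) hg1mem (r := 1)
    exact this
  have hT2 : Integrable (fun x => A * (|w x| * G x))
      (volume : Measure (EuclideanSpace ℝ (Fin n))) := hw.const_mul A
  -- pointwise bound
  have hpt : ∀ x, |(-(∑ i, fderiv ℝ φ x (EuclideanSpace.single i 1) * v x i) + φ x * w x)| ≤
      g1 x * g2 x + A * (|w x| * G x) := by
    intro x
    have hg1g2 : g1 x * g2 x = a x * ‖v x‖ := by
      simp only [hg1def, hg2def]
      have h := (Real.sqrt_pos.2 (hGpos x)).ne'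
      field_simp
    rw [hg1g2]
    have hCS : |∑ i, fderiv ℝ φ x (EuclideanSpace.single i 1) * v x i| ≤ a x * ‖v x‖ := by
      have hnv : ‖v x‖ = Real.sqrt (∑ i, (v x i) ^ 2) := by
        rw [EuclideanSpace.norm_eq]
        congr 1
        exact Finset.sum_congr rfl fun i _ => by rw [Real.norm_eq_abs, sq_abs]
      have h1 : (∑ i, fderiv ℝ φ x (EuclideanSpace.single i 1) * v x i) ^ 2 ≤
          (∑ i, (fderiv ℝ φ x (EuclideanSpace.single i 1)) ^ 2) * (∑ i, (v x i) ^ 2) :=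
        Finset.sum_mul_sq_le_sq_mul_sq _ _ _
      have h2 : |∑ i, fderiv ℝ φ x (EuclideanSpace.single i 1) * v x i| =
          Real.sqrt ((∑ i, fderiv ℝ φ x (EuclideanSpace.single i 1) * v x i) ^ 2) :=
        (Real.sqrt_sq_eq_abs _).symm
      rw [h2, ha, hnv, ← Real.sqrt_mul (Finset.sum_nonneg fun i _ => sq_nonneg _)]
      exact Real.sqrt_le_sqrt h1
    have hAw : |φ x * w x| ≤ A * (|w x| * G x) := by
      rw [abs_mul]
      calc |φ x| * |w x| ≤ A * G x * |w x| :=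
            mul_le_mul_of_nonneg_right (hA x) (abs_nonneg _)
        _ = A * (|w x| * G x) := by ring
    calc |(-(∑ i, fderiv ℝ φ x (EuclideanSpace.single i 1) * v x i) + φ x * w x)| ≤
          |(-(∑ i, fderiv ℝ φ x (EuclideanSpace.single i 1) * v x i))| + |φ x * w x| :=
          abs_add_le _ _
      _ ≤ a x * ‖v x‖ + A * (|w x| * G x) := by
          rw [abs_neg]; exact add_le_add hCS hAw
  -- combine
  have hmain : |∫ x, (-(∑ i, fderiv ℝ φ x (EuclideanSpace.single i 1) * v x i) + φ x * w x)| ≤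
      ∫ x, (g1 x * g2 x + A * (|w x| * G x)) := by
    calc |∫ x, (-(∑ i, fderiv ℝ φ x (EuclideanSpace.single i 1) * v x i) + φ x * w x)| ≤
        ∫ x, |(-(∑ i, fderiv ℝ φ x (EuclideanSpace.single i 1) * v x i) + φ x * w x)| :=
          by simpa [Real.norm_eq_abs] using
            (norm_integral_le_integral_norm (μ := (volume : Measure (EuclideanSpace ℝ (Fin n))))
            (fun x => (-(∑ i, fderiv ℝ φ x (EuclideanSpace.single i 1) * v x i) + φ x * w x)))
      _ ≤ ∫ x, (g1 x * g2 x + A * (|w x| * G x)) :=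
          integral_mono hfi.abs (hT1.add hT2) hpt
  rw [integral_add hT1 hT2] at hmain
  -- bound the first integral by Cauchy-Schwarz
  have hCSI : ∫ x, g1 x * g2 x ≤ B * S := by
    have h2 : (2 : ℝ).HolderConjugate 2 := Real.HolderConjugate.two_two
    have := integral_mul_le_Lp_mul_Lq_of_nonneg (μ := volume) h2
      (Filter.Eventually.of_forall fun x => div_nonneg (ha_nonneg x) (Real.sqrt_nonneg _))
      (Filter.Eventually.of_forall fun x =>
        mul_nonneg (norm_nonneg _) (Real.sqrt_nonneg _))
      (by rw [show ENNReal.ofReal (2:ℝ) = 2 by norm_num]; exact hg1mem)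
      (by rw [show ENNReal.ofReal (2:ℝ) = 2 by norm_num]; exact hg2mem)
    have e1 : ∀ (h : EuclideanSpace ℝ (Fin n) → ℝ), (∫ x, h x ^ (2 : ℝ)) = ∫ x, h x ^ 2 := by
      intro h
      refine integral_congr_ae (Filter.Eventually.of_forall fun x => ?_)
      show h x ^ (2:ℝ) = h x ^ 2
      rw [← Real.rpow_natCast (h x) 2]; norm_num
    rw [e1 g1, e1 g2] at this
    calc ∫ x, g1 x * g2 x ≤ (∫ x, g1 x ^ 2) ^ ((1 : ℝ) / 2) * (∫ x, g2 x ^ 2) ^ ((1 : ℝ) / 2) :=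
          this
      _ ≤ B * S := by
          have hI1 : ∫ x, g1 x ^ 2 ≤ B ^ 2 := by
            refine le_trans (le_of_eq ?_) hB
            exact integral_congr_ae (Filter.Eventually.of_forall fun x => hg1sq x)
          have hI1n : 0 ≤ ∫ x, g1 x ^ 2 := integral_nonneg fun x => sq_nonneg _
          have hI2 : (∫ x, g2 x ^ 2) = ∫ x, ‖v x‖ ^ 2 * G x := by
            refine integral_congr_ae (Filter.Eventually.of_forall fun x => ?_)
            simp only [hg2def, mul_pow, Real.sq_sqrt (hGpos x).le]
          rw [← Real.rpow_natCast B 2] at hI1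
          have h1 : (∫ x, g1 x ^ 2) ^ ((1 : ℝ) / 2) ≤ B := by
            calc (∫ x, g1 x ^ 2) ^ ((1 : ℝ) / 2) ≤ (B ^ (2 : ℝ)) ^ ((1 : ℝ) / 2) :=
                  Real.rpow_le_rpow hI1n hI1 (by norm_num)
              _ = B := by
                  rw [← Real.rpow_mul hB0]
                  norm_num
          have h2' : (∫ x, g2 x ^ 2) ^ ((1 : ℝ) / 2) = S := by
            rw [hI2, hSdef, Real.sqrt_eq_rpow]
          rw [h2']
          exact mul_le_mul_of_nonneg_right h1 hS0
  have hWI : (∫ x, A * (|w x| * G x)) = A * W := by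
    rw [hWdef]; exact integral_const_mul A _
  rw [hWI] at hmain
  calc |∫ x, (-(∑ i, fderiv ℝ φ x (EuclideanSpace.single i 1) * v x i) + φ x * w x)| ≤
      (∫ x, g1 x * g2 x) + A * W := hmain
    _ ≤ B * S + A * W := by linarith
    _ ≤ (A + B) * (S + W) := by nlinarith [mul_nonneg hA0 hS0, mul_nonneg hB0 hW0]
end

section
/- Let σ̃ be the L^p modulus of continuity of f at the origin over parabolic cylinders, σ̃(r) = sup_{ρ∈(0,r]} ( |Q_ρ⁻|^{-1} ∫_{Q_ρ⁻} |f − f(0)|^p )^{1/p}, extended by σ̃(r) = σ̃(1) for r ≥ 1, and let σ be the Gaussian-weighted modulus σ(r) = sup_{ρ∈(0,r]} ( ρ^{-2} ∫_{S_ρ} |f−f(0)|^p G(x,−t) dx dt )^{1/p}, where f is supported in Q₁⁻. Then for all r ∈ (0,1], σ(r) ≤ C ( σ̃(r) + σ̃(√r) + σ̃(1) e^{−c/r} ), with constants c, C > 0 depending only on n and p. In particular, if σ̃ is Dini then so is σ. -/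
open MeasureTheory Set Real Module

/-!
Cover `B₁ × (-ρ², 0)`, up to the null slice `t = 0`, by the dyadic parabolic annuli on which
`max (|x|, √-t) ∈ [2⁻ᵏ⁻¹, 2⁻ᵏ)`. On the `k`-th annulus the kernel is at most
`C 2ⁿᵏ exp (-4⁻ᵏ / 32ρ²)`, and the annulus lies in `Q⁻_{2⁻ᵏ}`, whose volume is `≈ 2⁻ᵏ⁽ⁿ⁺²⁾` and on
which the mean of `|f - f(0)|ᵖ` is at most `σ̃(2⁻ᵏ)ᵖ`; so the annulus contributes
`≲ 4⁻ᵏ exp (-4⁻ᵏ / 32ρ²) σ̃(2⁻ᵏ)ᵖ`. Scales `2⁻ᵏ ≤ √r` are controlled by `σ̃(√r)`; at larger scales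
`4⁻ᵏ > r ≥ ρ² / r`, so half of the Gaussian factor is at most `exp (-1 / 64r)`, and
`σ̃(2⁻ᵏ) ≤ σ̃(1)`. What remains is `∑ₖ 4⁻ᵏ exp (-4⁻ᵏ / 64ρ²) = O(ρ²)`, which telescopes because
`y e⁻ʸ ≤ 4/3 (e^{-y/4} - e⁻ʸ)`.
-/

open Nat in
lemma pow_mul_exp_neg_sq_div_eight_le (n : ℕ) {y : ℝ} (hy : 0 ≤ y) :
    y ^ n * exp (-(y ^ 2 / 8)) ≤ n ! * exp 2 := by
  have hpow : y ^ n ≤ n ! * exp y := by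
    have := pow_div_factorial_le_exp y hy n
    rwa [div_le_iff₀ (by positivity), mul_comm] at this
  have hexp : exp y * exp (-(y ^ 2 / 8)) ≤ exp 2 := by
    rw [← exp_add]
    exact exp_le_exp.mpr (by nlinarith [sq_nonneg (y - 4)])
  calc y ^ n * exp (-(y ^ 2 / 8)) ≤ n ! * exp y * exp (-(y ^ 2 / 8)) := by gcongr
    _ = n ! * (exp y * exp (-(y ^ 2 / 8))) := by ring
    _ ≤ n ! * exp 2 := by gcongr

open Nat in
lemma inv_pow_mul_exp_le_of_lt (n : ℕ) {a s ρ : ℝ} (hs : 0 < s) (hsρ : s < ρ) :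
    (s ^ n)⁻¹ * exp (-(a ^ 2 / (4 * s ^ 2)))
      ≤ n ! * exp 3 * ((max a s ^ n)⁻¹ * exp (-(max a s ^ 2 / (8 * ρ ^ 2)))) := by
  have hρ : 0 < ρ := hs.trans hsρ
  rcases le_total a s with has | hsa
  · rw [max_eq_right has]
    have hK : exp (1 / 8) ≤ n ! * exp 3 := by
      have h1 : (1 : ℝ) ≤ n ! := by exact_mod_cast n.factorial_pos
      have h2 : exp (1 / 8) ≤ exp 3 := exp_le_exp.mpr (by norm_num)
      nlinarith [exp_pos 3]
    have hgauss : 1 ≤ exp (1 / 8) * exp (-(s ^ 2 / (8 * ρ ^ 2))) := by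
      rw [← exp_add, one_le_exp_iff, ← sub_eq_add_neg, sub_nonneg,
        div_le_div_iff₀ (by positivity) (by positivity)]
      nlinarith
    calc (s ^ n)⁻¹ * exp (-(a ^ 2 / (4 * s ^ 2))) ≤ (s ^ n)⁻¹ * 1 := by
          gcongr; exact exp_le_one_iff.mpr (neg_nonpos.mpr (by positivity))
      _ ≤ (s ^ n)⁻¹ * (exp (1 / 8) * exp (-(s ^ 2 / (8 * ρ ^ 2)))) := by gcongr
      _ = exp (1 / 8) * ((s ^ n)⁻¹ * exp (-(s ^ 2 / (8 * ρ ^ 2)))) := by ring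
      _ ≤ _ := by gcongr
  · rw [max_eq_left hsa]
    have ha0 : 0 < a := hs.trans_le hsa
    have hsplit : exp (-(a ^ 2 / (4 * s ^ 2)))
        = exp (-((a / s) ^ 2 / 8)) * exp (-(a ^ 2 / (8 * s ^ 2))) := by
      rw [← exp_add]; congr 1; field_simp; ring
    have hρs : exp (-(a ^ 2 / (8 * s ^ 2))) ≤ exp (-(a ^ 2 / (8 * ρ ^ 2))) := by
      gcongr
    calc (s ^ n)⁻¹ * exp (-(a ^ 2 / (4 * s ^ 2)))
        = ((a / s) ^ n * exp (-((a / s) ^ 2 / 8)))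
            * ((a ^ n)⁻¹ * exp (-(a ^ 2 / (8 * s ^ 2)))) := by
          rw [hsplit, div_pow, div_pow]; field_simp
      _ ≤ (n ! * exp 2) * ((a ^ n)⁻¹ * exp (-(a ^ 2 / (8 * ρ ^ 2)))) := by
          gcongr ?_ * (_ * ?_)
          exact pow_mul_exp_neg_sq_div_eight_le n (by positivity)
      _ ≤ _ := by gcongr; norm_num

lemma mul_exp_neg_le_sub_exp (z : ℝ) :
    z * exp (-z) ≤ 4 / 3 * (exp (-(z / 4)) - exp (-z)) := by
  have h := add_one_le_exp (3 / 4 * z)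
  have hsplit : exp (-(z / 4)) = exp (3 / 4 * z) * exp (-z) := by rw [← exp_add]; ring_nf
  rw [hsplit]
  nlinarith [exp_pos (-z)]

lemma sum_range_sq_half_pow_mul_exp_le {τ : ℝ} (hτ : 0 < τ) (N : ℕ) :
    ∑ k ∈ Finset.range N, ((1 / 2 : ℝ) ^ k) ^ 2 * exp (-(((1 / 2 : ℝ) ^ k) ^ 2 / τ))
      ≤ 4 / 3 * τ := by
  set e : ℕ → ℝ := fun k => exp (-(((1 / 2 : ℝ) ^ k) ^ 2 / τ))
  have hterm : ∀ k, ((1 / 2 : ℝ) ^ k) ^ 2 * e k ≤ 4 / 3 * τ * (e (k + 1) - e k) := by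
    intro k
    have h := mul_exp_neg_le_sub_exp (((1 / 2 : ℝ) ^ k) ^ 2 / τ)
    have hq : ((1 / 2 : ℝ) ^ (k + 1)) ^ 2 / τ = ((1 / 2 : ℝ) ^ k) ^ 2 / τ / 4 := by ring
    simp only [e, hq]
    calc ((1 / 2 : ℝ) ^ k) ^ 2 * exp (-(((1 / 2 : ℝ) ^ k) ^ 2 / τ))
        = τ * (((1 / 2 : ℝ) ^ k) ^ 2 / τ * exp (-(((1 / 2 : ℝ) ^ k) ^ 2 / τ))) := by
          field_simp
      _ ≤ _ := by nlinarith
  calc ∑ k ∈ Finset.range N, ((1 / 2 : ℝ) ^ k) ^ 2 * e k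
      ≤ ∑ k ∈ Finset.range N, 4 / 3 * τ * (e (k + 1) - e k) := Finset.sum_le_sum fun k _ => hterm k
    _ = 4 / 3 * τ * (e N - e 0) := by rw [← Finset.mul_sum, Finset.sum_range_sub]
    _ ≤ 4 / 3 * τ := by
        have h1 : e N ≤ 1 := exp_le_one_iff.mpr (neg_nonpos.mpr (by positivity))
        have h0 : 0 < e 0 := exp_pos _
        nlinarith

lemma exists_half_pow_le_lt {x : ℝ} (hx0 : 0 < x) (hx1 : x < 1) :
    ∃ k : ℕ, (1 / 2 : ℝ) ^ k / 2 ≤ x ∧ x < (1 / 2) ^ k := by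
  have h : ∃ j : ℕ, (1 / 2 : ℝ) ^ j ≤ x :=
    (exists_pow_lt_of_lt_one hx0 (by norm_num)).imp fun _ => le_of_lt
  obtain ⟨k, hk⟩ : ∃ k, Nat.find h = k + 1 := Nat.exists_eq_succ_of_ne_zero fun h0 => by
    have := Nat.find_spec h
    rw [h0, pow_zero] at this
    linarith
  refine ⟨k, ?_, not_le.mp (Nat.find_min h (by omega))⟩
  have := Nat.find_spec h
  rwa [hk, pow_succ, ← div_eq_mul_one_div] at this

lemma rpow_one_div_le_of_le_mul_add_rpow {x A a b p : ℝ} (hp : 1 ≤ p) (hx : 0 ≤ x) (hA : 0 ≤ A)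
    (ha : 0 ≤ a) (hb : 0 ≤ b) (h : x ≤ A * (a ^ p + b ^ p)) :
    x ^ (1 / p) ≤ A ^ (1 / p) * (a + b) := by
  have hp0 : 0 < p := one_pos.trans_le hp
  have hroot : ∀ y, 0 ≤ y → (A * y ^ p) ^ (1 / p) = A ^ (1 / p) * y := fun y hy => by
    rw [Real.mul_rpow hA (by positivity), one_div, Real.rpow_rpow_inv hy hp0.ne']
  calc x ^ (1 / p) ≤ (A * a ^ p + A * b ^ p) ^ (1 / p) := by
        gcongr; linarith
    _ ≤ (A * a ^ p) ^ (1 / p) + (A * b ^ p) ^ (1 / p) :=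
        Real.rpow_add_le_add_rpow (by positivity) (by positivity) (by positivity)
          ((div_le_one hp0).mpr hp)
    _ = A ^ (1 / p) * (a + b) := by rw [hroot a ha, hroot b hb, mul_add]

lemma sq_mul_exp_mul_rpow_le_of_monotoneOn {σ : ℝ → ℝ} (hσ : MonotoneOn σ (Ioi 0))
    (hσ0 : ∀ s, 0 < s → 0 ≤ σ s) {p ρ r s : ℝ} (hp : 0 ≤ p) (hρ : 0 < ρ) (hρr : ρ ≤ r)
    (hs : s ∈ Ioc 0 1) :
    s ^ 2 * exp (-(s ^ 2 / (32 * ρ ^ 2))) * σ s ^ p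
      ≤ s ^ 2 * exp (-(s ^ 2 / (64 * ρ ^ 2))) * (σ √r ^ p + exp (-(1 / (64 * r))) * σ 1 ^ p) := by
  obtain ⟨hs0, hs1⟩ := hs
  have hr : 0 < r := hρ.trans_le hρr
  have hσs := hσ0 s hs0
  have hσr := hσ0 √r (Real.sqrt_pos.mpr hr)
  have hσ1 := hσ0 1 one_pos
  have hdecay : exp (-(s ^ 2 / (32 * ρ ^ 2)))
      = exp (-(s ^ 2 / (64 * ρ ^ 2))) * exp (-(s ^ 2 / (64 * ρ ^ 2))) := by
    rw [← exp_add]; ring_nf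
  rcases le_or_gt s √r with hsr | hrs
  · have hσle : σ s ^ p ≤ σ √r ^ p :=
      Real.rpow_le_rpow hσs (hσ hs0 (Real.sqrt_pos.mpr hr) hsr) hp
    have hexp : exp (-(s ^ 2 / (32 * ρ ^ 2))) ≤ exp (-(s ^ 2 / (64 * ρ ^ 2))) := by
      gcongr; norm_num
    calc s ^ 2 * exp (-(s ^ 2 / (32 * ρ ^ 2))) * σ s ^ p
        ≤ s ^ 2 * exp (-(s ^ 2 / (64 * ρ ^ 2))) * σ √r ^ p := by gcongr
      _ ≤ _ := by
          gcongr
          exact le_add_of_nonneg_right (by positivity)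
  · have hσle : σ s ^ p ≤ σ 1 ^ p := Real.rpow_le_rpow hσs (hσ hs0 (mem_Ioi.mpr one_pos) hs1) hp
    have hrs2 : r < s ^ 2 := by
      have := Real.sq_sqrt hr.le
      nlinarith [Real.sqrt_nonneg r]
    have hexp : exp (-(s ^ 2 / (64 * ρ ^ 2))) ≤ exp (-(1 / (64 * r))) := by
      refine exp_le_exp.mpr (neg_le_neg ?_)
      rw [div_le_div_iff₀ (by positivity) (by positivity)]
      nlinarith [mul_le_mul hρr hρr hρ.le hr.le]
    calc s ^ 2 * exp (-(s ^ 2 / (32 * ρ ^ 2))) * σ s ^ p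
        = s ^ 2 * exp (-(s ^ 2 / (64 * ρ ^ 2))) * (exp (-(s ^ 2 / (64 * ρ ^ 2))) * σ s ^ p) := by
          rw [hdecay]; ring
      _ ≤ s ^ 2 * exp (-(s ^ 2 / (64 * ρ ^ 2))) * (exp (-(1 / (64 * r))) * σ 1 ^ p) := by
          gcongr
      _ ≤ _ := by
          gcongr
          exact le_add_of_nonneg_left (by positivity)

lemma rpow_neg_half_eq_inv_sqrt_pow (n : ℕ) {u : ℝ} (hu : 0 ≤ u) :
    u ^ (-(n : ℝ) / 2) = (√u ^ n)⁻¹ := by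
  rw [Real.sqrt_eq_rpow, ← Real.rpow_natCast, ← Real.rpow_mul hu, neg_div, Real.rpow_neg hu]
  ring_nf

section Integral

variable {α : Type*} [MeasurableSpace α] {μ : Measure α}

lemma ofReal_setIntegral_le_setLIntegral_ofReal {f : α → ℝ} {s : Set α} (hs : MeasurableSet s)
    (hf : ∀ x ∈ s, 0 ≤ f x) :
    ENNReal.ofReal (∫ x in s, f x ∂μ) ≤ ∫⁻ x in s, ENNReal.ofReal (f x) ∂μ :=
  (Real.ofReal_le_enorm _).trans <| (enorm_integral_le_lintegral_enorm _).trans_eq <|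
    setLIntegral_congr_fun hs fun x hx => Real.enorm_of_nonneg (hf x hx)

lemma setLIntegral_ofReal_mul_le {s t : Set α} (hs : MeasurableSet s) (hst : s ⊆ t)
    {f w : α → ℝ} {b : ℝ} (hb : 0 ≤ b) (hf : ∀ x, 0 ≤ f x) (hft : IntegrableOn f t μ)
    (hw : ∀ x ∈ s, w x ≤ b) :
    ∫⁻ x in s, ENNReal.ofReal (f x * w x) ∂μ ≤ ENNReal.ofReal (b * ∫ x in t, f x ∂μ) :=
  calc ∫⁻ x in s, ENNReal.ofReal (f x * w x) ∂μ
      ≤ ∫⁻ x in s, ENNReal.ofReal b * ENNReal.ofReal (f x) ∂μ :=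
        setLIntegral_mono' hs fun x hx => by
          rw [← ENNReal.ofReal_mul hb, mul_comm b]
          exact ENNReal.ofReal_le_ofReal (mul_le_mul_of_nonneg_left (hw x hx) (hf x))
    _ = ENNReal.ofReal b * ∫⁻ x in s, ENNReal.ofReal (f x) ∂μ :=
        lintegral_const_mul' _ _ ENNReal.ofReal_ne_top
    _ ≤ ENNReal.ofReal b * ∫⁻ x in t, ENNReal.ofReal (f x) ∂μ := by
        gcongr
    _ = ENNReal.ofReal (b * ∫ x in t, f x ∂μ) := by
        rw [ENNReal.ofReal_mul hb, ofReal_integral_eq_lintegral_ofReal hft (ae_of_all _ hf)]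

lemma setIntegral_le_of_average_rpow_le {f : α → ℝ} {s : Set α} (hf : ∀ x, 0 ≤ f x)
    (hμs : 0 < (μ s).toReal) {p a : ℝ} (hp : 0 < p)
    (havg : ((μ s).toReal⁻¹ * ∫ x in s, f x ∂μ) ^ (1 / p) ≤ a) :
    ∫ x in s, f x ∂μ ≤ (μ s).toReal * a ^ p := by
  have hI : 0 ≤ ∫ x in s, f x ∂μ := integral_nonneg hf
  have ha : 0 ≤ a := (Real.rpow_nonneg (by positivity) _).trans havg
  rw [one_div, Real.rpow_inv_le_iff_of_pos (by positivity) ha hp] at havg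
  calc ∫ x in s, f x ∂μ = (μ s).toReal * ((μ s).toReal⁻¹ * ∫ x in s, f x ∂μ) := by field_simp
    _ ≤ (μ s).toReal * a ^ p := by gcongr

end Integral

section Parabolic

variable {E : Type*} [NormedAddCommGroup E]

noncomputable def backwardHeatKernel (c : ℝ) (n : ℕ) (X : E × ℝ) : ℝ :=
  c * (-X.2) ^ (-(n : ℝ) / 2) * exp (‖X.1‖ ^ 2 / (4 * X.2))

noncomputable def parabolicNorm (X : E × ℝ) : ℝ := max ‖X.1‖ √(-X.2)

variable (E) in
noncomputable def parabolicCylinder (ρ : ℝ) : Set (E × ℝ) := Metric.ball 0 ρ ×ˢ Ioc (-ρ ^ 2) 0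

variable (E) in
noncomputable def parabolicAnnulus (ρ s : ℝ) : Set (E × ℝ) :=
  {X | X.2 ∈ Ioo (-ρ ^ 2) 0 ∧ parabolicNorm X ∈ Ico (s / 2) s}

lemma continuous_parabolicNorm : Continuous (parabolicNorm : E × ℝ → ℝ) :=
  continuous_fst.norm.max (continuous_snd.neg.sqrt)

lemma parabolicCylinder_mono {s s' : ℝ} (hs : 0 ≤ s) (hss' : s ≤ s') :
    parabolicCylinder E s ⊆ parabolicCylinder E s' :=
  prod_mono (Metric.ball_subset_ball hss')
    (Ioc_subset_Ioc_left (neg_le_neg (pow_le_pow_left₀ hs hss' 2)))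

lemma parabolicAnnulus_subset_parabolicCylinder (ρ s : ℝ) :
    parabolicAnnulus E ρ s ⊆ parabolicCylinder E s := by
  rintro X ⟨⟨-, ht⟩, -, hM⟩
  have hx : ‖X.1‖ < s := (le_max_left _ _).trans_lt hM
  have hsqrt : √(-X.2) < s := (le_max_right _ _).trans_lt hM
  refine ⟨mem_ball_zero_iff.mpr hx, ?_, ht.le⟩
  have := Real.sq_sqrt (neg_nonneg.mpr ht.le)
  nlinarith [Real.sqrt_nonneg (-X.2)]

lemma backwardHeatKernel_nonneg {c : ℝ} (hc : 0 ≤ c) {n : ℕ} {X : E × ℝ} (ht : X.2 ≤ 0) :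
    0 ≤ backwardHeatKernel c n X := by
  have := Real.rpow_nonneg (neg_nonneg.mpr ht) (-(n : ℝ) / 2)
  unfold backwardHeatKernel
  positivity

open Nat in
lemma backwardHeatKernel_le {c : ℝ} (hc : 0 ≤ c) (n : ℕ) {ρ : ℝ} {X : E × ℝ}
    (ht : X.2 ∈ Ioo (-ρ ^ 2) 0) :
    backwardHeatKernel c n X
      ≤ c * n ! * exp 3
          * ((parabolicNorm X ^ n)⁻¹ * exp (-(parabolicNorm X ^ 2 / (8 * ρ ^ 2)))) := by
  obtain ⟨hρt, ht0⟩ := ht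
  have hs : 0 < √(-X.2) := Real.sqrt_pos.mpr (by linarith)
  have hsρ : √(-X.2) < |ρ| := Real.sqrt_lt_sqrt (by linarith) (by linarith) |>.trans_eq
    (Real.sqrt_sq_eq_abs ρ)
  have hexp : ‖X.1‖ ^ 2 / (4 * X.2) = -(‖X.1‖ ^ 2 / (4 * √(-X.2) ^ 2)) := by
    rw [Real.sq_sqrt (by linarith)]; field_simp
  have key := inv_pow_mul_exp_le_of_lt n hs hsρ (a := ‖X.1‖)
  rw [sq_abs] at key
  unfold backwardHeatKernel parabolicNorm
  rw [rpow_neg_half_eq_inv_sqrt_pow n (by linarith), hexp, mul_assoc c, mul_assoc c, mul_assoc c]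
  exact mul_le_mul_of_nonneg_left key hc

open Nat in
lemma backwardHeatKernel_le_of_mem_parabolicAnnulus {c : ℝ} (hc : 0 ≤ c) (n : ℕ) {ρ s : ℝ}
    (hρ : 0 < ρ) {X : E × ℝ} (hX : X ∈ parabolicAnnulus E ρ s) :
    backwardHeatKernel c n X
      ≤ c * n ! * exp 3 * 2 ^ n * ((s ^ n)⁻¹ * exp (-(s ^ 2 / (32 * ρ ^ 2)))) := by
  obtain ⟨ht, hlow, hup⟩ := hX
  have hM : 0 < parabolicNorm X :=
    (Real.sqrt_pos.mpr (neg_pos.mpr ht.2)).trans_le (le_max_right _ _)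
  have hs : 0 < s / 2 := half_pos (hM.trans hup)
  calc backwardHeatKernel c n X
      ≤ c * n ! * exp 3 * ((parabolicNorm X ^ n)⁻¹ * exp (-(parabolicNorm X ^ 2 / (8 * ρ ^ 2)))) :=
        backwardHeatKernel_le hc n ht
    _ ≤ c * n ! * exp 3 * (((s / 2) ^ n)⁻¹ * exp (-((s / 2) ^ 2 / (8 * ρ ^ 2)))) := by
        gcongr
    _ = _ := by rw [div_pow, inv_div]; field_simp; ring_nf

variable [MeasureSpace E]

lemma ae_le_iUnion_parabolicAnnulus [SFinite (volume : Measure E)] {ρ : ℝ} (hρ0 : 0 ≤ ρ)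
    (hρ1 : ρ ≤ 1) :
    (Metric.ball (0 : E) 1 ×ˢ Ioc (-ρ ^ 2) 0 : Set (E × ℝ))
      ≤ᵐ[volume] (⋃ k : ℕ, parabolicAnnulus E ρ ((1 / 2) ^ k) : Set (E × ℝ)) := by
  have hnull : ∀ᵐ X : E × ℝ, X.2 ≠ 0 := by
    rw [ae_iff, Measure.volume_eq_prod]
    have : {X : E × ℝ | ¬X.2 ≠ 0} = univ ×ˢ {0} := by ext; simp
    rw [this, Measure.prod_prod, Real.volume_singleton, mul_zero]
  filter_upwards [hnull] with X ht0 hX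
  obtain ⟨hx, hρt, ht⟩ := hX
  have ht : X.2 < 0 := lt_of_le_of_ne ht ht0
  have hM0 : 0 < parabolicNorm X :=
    (Real.sqrt_pos.mpr (neg_pos.mpr ht)).trans_le (le_max_right _ _)
  have hM1 : parabolicNorm X < 1 := by
    refine max_lt (mem_ball_zero_iff.mp hx) ?_
    rw [Real.sqrt_lt' one_pos]
    nlinarith
  obtain ⟨k, hk⟩ := exists_half_pow_le_lt hM0 hM1
  exact mem_iUnion.mpr ⟨k, ⟨hρt, ht⟩, hk⟩

variable [BorelSpace E]

lemma measurableSet_parabolicAnnulus (ρ s : ℝ) : MeasurableSet (parabolicAnnulus E ρ s) :=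
  (measurable_snd measurableSet_Ioo).inter (continuous_parabolicNorm.measurable measurableSet_Ico)

variable [NormedSpace ℝ E] [FiniteDimensional ℝ E] [(volume : Measure E).IsAddHaarMeasure]

lemma volume_parabolicCylinder {s : ℝ} (hs : 0 < s) :
    (volume (parabolicCylinder E s)).toReal
      = s ^ (finrank ℝ E + 2) * (volume (Metric.ball (0 : E) 1)).toReal := by
  rw [parabolicCylinder, Measure.volume_eq_prod, Measure.prod_prod, Real.volume_Ioc,
    sub_neg_eq_add, zero_add, Measure.addHaar_ball_of_pos _ _ hs, ENNReal.toReal_mul,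
    ENNReal.toReal_mul, ENNReal.toReal_ofReal (by positivity),
    ENNReal.toReal_ofReal (by positivity)]
  ring

open Nat in
theorem setIntegral_mul_backwardHeatKernel_le {n : ℕ} (hn : finrank ℝ E = n) {c : ℝ} (hc : 0 ≤ c)
    {p : ℝ} (hp : 0 < p) {h : E × ℝ → ℝ} (hh : ∀ X, 0 ≤ h X)
    (hint : IntegrableOn h (parabolicCylinder E 1)) {σ : ℝ → ℝ} (hσ : MonotoneOn σ (Ioi 0))
    (hσ0 : ∀ s, 0 < s → 0 ≤ σ s)
    (havg : ∀ s ∈ Ioc (0 : ℝ) 1, ((volume (parabolicCylinder E s)).toReal⁻¹ *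
      ∫ X in parabolicCylinder E s, h X) ^ (1 / p) ≤ σ s)
    {ρ r : ℝ} (hρ : 0 < ρ) (hρr : ρ ≤ r) (hr1 : r ≤ 1) :
    1 / ρ ^ 2 * ∫ X in Metric.ball (0 : E) 1 ×ˢ Ioc (-ρ ^ 2) 0, h X * backwardHeatKernel c n X
      ≤ 256 / 3 * c * n ! * exp 3 * 2 ^ n * (volume (Metric.ball (0 : E) 1)).toReal
        * (σ √r ^ p + exp (-(1 / (64 * r))) * σ 1 ^ p) := by
  set V := (volume (Metric.ball (0 : E) 1)).toReal
  set B := c * n ! * exp 3 * 2 ^ n * V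
  set S := σ √r ^ p + exp (-(1 / (64 * r))) * σ 1 ^ p
  have hV : 0 < V := ENNReal.toReal_pos (Metric.measure_ball_pos _ _ one_pos).ne'
    measure_ball_lt_top.ne
  have hS : 0 ≤ S := by
    have := hσ0 √r (Real.sqrt_pos.mpr (hρ.trans_le hρr))
    have := hσ0 1 one_pos
    positivity
  have hannulus : ∀ k : ℕ,
      ∫⁻ X in parabolicAnnulus E ρ ((1 / 2) ^ k), ENNReal.ofReal (h X * backwardHeatKernel c n X)
        ≤ ENNReal.ofReal
            (B * (((1 / 2) ^ k) ^ 2 * exp (-(((1 / 2) ^ k) ^ 2 / (64 * ρ ^ 2)))) * S) := by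
    intro k
    set s : ℝ := (1 / 2) ^ k
    have hs : s ∈ Ioc 0 1 := ⟨by positivity, pow_le_one₀ (by norm_num) (by norm_num)⟩
    have hQs : 0 < (volume (parabolicCylinder E s)).toReal := by
      rw [volume_parabolicCylinder hs.1]; positivity
    have hcyl := setIntegral_le_of_average_rpow_le hh hQs hp (havg s hs)
    rw [volume_parabolicCylinder hs.1, hn] at hcyl
    refine (setLIntegral_ofReal_mul_le (measurableSet_parabolicAnnulus ρ s)
      (parabolicAnnulus_subset_parabolicCylinder ρ s) (by positivity) hh
      (hint.mono_set ?_) fun X hX => backwardHeatKernel_le_of_mem_parabolicAnnulus hc n hρ hX).trans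
      (ENNReal.ofReal_le_ofReal ?_)
    · exact parabolicCylinder_mono hs.1.le hs.2
    · calc c * n ! * exp 3 * 2 ^ n * ((s ^ n)⁻¹ * exp (-(s ^ 2 / (32 * ρ ^ 2))))
            * ∫ X in parabolicCylinder E s, h X
          ≤ c * n ! * exp 3 * 2 ^ n * ((s ^ n)⁻¹ * exp (-(s ^ 2 / (32 * ρ ^ 2))))
            * (s ^ (n + 2) * V * σ s ^ p) := by gcongr
        _ = B * (s ^ 2 * exp (-(s ^ 2 / (32 * ρ ^ 2))) * σ s ^ p) := by
            have hsn : (s ^ n)⁻¹ * s ^ (n + 2) = s ^ 2 := by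
              rw [pow_add, ← mul_assoc, inv_mul_cancel₀ (pow_ne_zero _ hs.1.ne'), one_mul]
            rw [← hsn]; ring
        _ ≤ B * (s ^ 2 * exp (-(s ^ 2 / (64 * ρ ^ 2))) * S) :=
            mul_le_mul_of_nonneg_left (sq_mul_exp_mul_rpow_le_of_monotoneOn hσ hσ0 hp.le hρ hρr hs)
              (by positivity)
        _ = _ := by ring
  have hsum : ∑' k : ℕ,
      ENNReal.ofReal (B * (((1 / 2) ^ k) ^ 2 * exp (-(((1 / 2) ^ k) ^ 2 / (64 * ρ ^ 2)))) * S)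
        ≤ ENNReal.ofReal (B * (4 / 3 * (64 * ρ ^ 2)) * S) := by
    refine ENNReal.tsum_le_of_sum_range_le fun N => ?_
    rw [← ENNReal.ofReal_sum_of_nonneg fun k _ => by positivity, ← Finset.sum_mul,
      ← Finset.mul_sum]
    gcongr
    exact sum_range_sq_half_pow_mul_exp_le (by positivity) N
  have hD : MeasurableSet (Metric.ball (0 : E) 1 ×ˢ Ioc (-ρ ^ 2) (0 : ℝ)) :=
    measurableSet_ball.prod measurableSet_Ioc
  have hlint : ENNReal.ofReal (∫ X in Metric.ball (0 : E) 1 ×ˢ Ioc (-ρ ^ 2) 0,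
      h X * backwardHeatKernel c n X) ≤ ENNReal.ofReal (B * (4 / 3 * (64 * ρ ^ 2)) * S) :=
    calc _ ≤ ∫⁻ X in Metric.ball (0 : E) 1 ×ˢ Ioc (-ρ ^ 2) 0,
            ENNReal.ofReal (h X * backwardHeatKernel c n X) :=
          ofReal_setIntegral_le_setLIntegral_ofReal hD fun X hX =>
            mul_nonneg (hh X) (backwardHeatKernel_nonneg hc hX.2.2)
      _ ≤ ∫⁻ X in ⋃ k : ℕ, parabolicAnnulus E ρ ((1 / 2) ^ k),
            ENNReal.ofReal (h X * backwardHeatKernel c n X) :=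
          lintegral_mono_set' (ae_le_iUnion_parabolicAnnulus hρ.le (hρr.trans hr1))
      _ ≤ ∑' k : ℕ, ∫⁻ X in parabolicAnnulus E ρ ((1 / 2) ^ k),
            ENNReal.ofReal (h X * backwardHeatKernel c n X) := lintegral_iUnion_le _ _
      _ ≤ _ := (ENNReal.tsum_le_tsum hannulus).trans hsum
  calc _ ≤ 1 / ρ ^ 2 * (B * (4 / 3 * (64 * ρ ^ 2)) * S) :=
        mul_le_mul_of_nonneg_left ((ENNReal.ofReal_le_ofReal_iff (by positivity)).mp hlint)
          (by positivity)
    _ = _ := by field_simp; ring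

end Parabolic

/-- Bound of the Gaussian-weighted modulus of continuity `σ` in terms of the usual
`L^p` modulus `σ̃` over parabolic cylinders:
`σ(r) ≤ C (σ̃(r) + σ̃(√r) + σ̃(1)e^{-c/r})` for `r ∈ (0,1]`, with constants depending
only on `n` and `p`. -/
theorem modulus_comparison (n : ℕ) (p : ℝ) (hp : 1 ≤ p) (cn : ℝ) (hcn : 0 < cn) :
    ∃ c C : ℝ, 0 < c ∧ 0 < C ∧
      ∀ (f : EuclideanSpace ℝ (Fin n) × ℝ → ℝ) (f0 : ℝ) (σt : ℝ → ℝ),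
        IntegrableOn (fun X => |f X - f0| ^ p)
          (Metric.ball (0 : EuclideanSpace ℝ (Fin n)) 1 ×ˢ Ioc (-1:ℝ) 0) →
        MonotoneOn σt (Ioi (0:ℝ)) →
        (∀ r : ℝ, 0 < r → 0 ≤ σt r) →
        (∀ r : ℝ, 1 ≤ r → σt r = σt 1) →
        (∀ ρ ∈ Ioc (0:ℝ) 1,
          ((volume (Metric.ball (0 : EuclideanSpace ℝ (Fin n)) ρ ×ˢ
              Ioc (-ρ^2) (0:ℝ))).toReal⁻¹ *
            ∫ X in Metric.ball (0 : EuclideanSpace ℝ (Fin n)) ρ ×ˢ Ioc (-ρ^2) (0:ℝ),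
              |f X - f0| ^ p) ^ (1/p) ≤ σt ρ) →
        ∀ r ∈ Ioc (0:ℝ) 1, ∀ ρ ∈ Ioc (0:ℝ) r,
          ((1 / ρ ^ 2) *
            ∫ X in Metric.ball (0 : EuclideanSpace ℝ (Fin n)) 1 ×ˢ Ioc (-ρ^2) (0:ℝ),
              |f X - f0| ^ p *
                (cn * (-X.2) ^ (-(n:ℝ)/2) * Real.exp (‖X.1‖ ^ 2 / (4 * X.2)))) ^ (1/p)
            ≤ C * (σt r + σt (Real.sqrt r) + σt 1 * Real.exp (-c / r)) := by
  have hp0 : 0 < p := one_pos.trans_le hp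
  set A := 256 / 3 * cn * n.factorial * exp 3 * 2 ^ n
    * (volume (Metric.ball (0 : EuclideanSpace ℝ (Fin n)) 1)).toReal
  have hA : 0 < A := by
    have := ENNReal.toReal_pos (Metric.measure_ball_pos volume
      (0 : EuclideanSpace ℝ (Fin n)) one_pos).ne' measure_ball_lt_top.ne
    positivity
  refine ⟨1 / (64 * p), A ^ (1 / p), by positivity, by positivity, ?_⟩
  intro f f0 σt hint hσ hσ0 _ havg r ⟨hr0, hr1⟩ ρ ⟨hρ0, hρr⟩
  have hI := setIntegral_mul_backwardHeatKernel_le (finrank_euclideanSpace_fin) hcn.le hp0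
    (fun X => Real.rpow_nonneg (abs_nonneg (f X - f0)) p) (by simpa [parabolicCylinder] using hint)
    hσ hσ0 havg hρ0 hρr hr1
  have hexp : exp (-(1 / (64 * r))) * σt 1 ^ p = (σt 1 * exp (-(1 / (64 * p)) / r)) ^ p := by
    rw [Real.mul_rpow (hσ0 1 one_pos) (exp_pos _).le, ← exp_mul, mul_comm]
    congr 2
    field_simp
  have hnonneg : 0 ≤ 1 / ρ ^ 2 * ∫ X in Metric.ball (0 : EuclideanSpace ℝ (Fin n)) 1 ×ˢ
      Ioc (-ρ ^ 2) 0, |f X - f0| ^ p * backwardHeatKernel cn n X :=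
    mul_nonneg (by positivity) (setIntegral_nonneg (measurableSet_ball.prod measurableSet_Ioc)
      fun X hX => mul_nonneg (by positivity) (backwardHeatKernel_nonneg hcn.le hX.2.2))
  calc _ ≤ A ^ (1 / p) * (σt √r + σt 1 * exp (-(1 / (64 * p)) / r)) :=
        rpow_one_div_le_of_le_mul_add_rpow hp hnonneg hA.le
          (hσ0 _ (Real.sqrt_pos.mpr hr0)) (mul_nonneg (hσ0 1 one_pos) (exp_pos _).le) (hexp ▸ hI)
    _ ≤ _ := by have := hσ0 r hr0; gcongr; linarith
end

section
/- Let ω be a nondecreasing modulus of continuity and let Γ ⊂ ℝ^{n+1} with projections p_X : ℝ^{n+1} → ℝ^{n+1} (orthogonal projections onto affine subspaces containing the time direction) satisfying: (i) d(Y − X − p_X(Y−X)) ≤ d(Y−X) ω(d(Y−X)) for all X,Y ∈ Γ, and (ii) d((p_Y − p_X)(Z)) ≤ d(Z) ω(d(Y−X)) for all Z and X,Y ∈ Γ. Fix X₀ ∈ Γ and choose r₀ with ω(2√2 r₀) ≤ 1/4. Then for all X, Y ∈ Γ ∩ Q_{r₀}(X₀), one has d(p_{X₀}(Y−X)) ≥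 (1/2) d(Y−X); in particular Γ ∩ Q_{r₀}(X₀) is a graph over its projection p_{X₀}(Γ ∩ Q_{r₀}(X₀)). -/
open Set

lemma d_subadd (n : ℕ) (d : EuclideanSpace ℝ (Fin n) × ℝ → ℝ)
    (hd : ∀ Z : EuclideanSpace ℝ (Fin n) × ℝ, d Z = Real.sqrt (‖Z.1‖ ^ 2 + |Z.2|))
    (A B : EuclideanSpace ℝ (Fin n) × ℝ) : d (A + B) ≤ d A + d B := by
  rw [hd, hd, hd]
  set x := ‖A.1‖ ^ 2 + |A.2| with hx
  set y := ‖B.1‖ ^ 2 + |B.2| with hy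
  have hx0 : (0:ℝ) ≤ x := by positivity
  have hy0 : (0:ℝ) ≤ y := by positivity
  have hax : ‖A.1‖ ≤ Real.sqrt x := by
    rw [show ‖A.1‖ = Real.sqrt (‖A.1‖^2) by rw [Real.sqrt_sq (norm_nonneg _)]]
    exact Real.sqrt_le_sqrt (by simp [hx, abs_nonneg])
  have hby : ‖B.1‖ ≤ Real.sqrt y := by
    rw [show ‖B.1‖ = Real.sqrt (‖B.1‖^2) by rw [Real.sqrt_sq (norm_nonneg _)]]
    exact Real.sqrt_le_sqrt (by simp [hy, abs_nonneg])
  have key : ‖(A + B).1‖ ^ 2 + |(A + B).2| ≤ (Real.sqrt x + Real.sqrt y) ^ 2 := by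
    have h1 : ‖(A + B).1‖ ≤ ‖A.1‖ + ‖B.1‖ := norm_add_le _ _
    have h2 : |(A + B).2| ≤ |A.2| + |B.2| := abs_add_le _ _
    have h3 : ‖(A + B).1‖ ^ 2 ≤ (‖A.1‖ + ‖B.1‖) ^ 2 := by
      apply pow_le_pow_left₀ (norm_nonneg _) h1
    have hmul : ‖A.1‖ * ‖B.1‖ ≤ Real.sqrt x * Real.sqrt y :=
      mul_le_mul hax hby (norm_nonneg _) (Real.sqrt_nonneg _)
    have hsx : Real.sqrt x ^ 2 = x := Real.sq_sqrt hx0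
    have hsy : Real.sqrt y ^ 2 = y := Real.sq_sqrt hy0
    nlinarith [norm_nonneg A.1, norm_nonneg B.1]
  calc Real.sqrt (‖(A + B).1‖ ^ 2 + |(A + B).2|)
      ≤ Real.sqrt ((Real.sqrt x + Real.sqrt y) ^ 2) := Real.sqrt_le_sqrt key
    _ = Real.sqrt x + Real.sqrt y := Real.sqrt_sq (by positivity)

/-- If the tangent projections `p_X` approximate the set `Γ` to first order with
uniform modulus `ω` (hypotheses (i) and (ii)), and `ω(2√2 r₀) ≤ 1/4`, then near
`X₀ ∈ Γ` one has `d(p_{X₀}(Y−X)) ≥ ½ d(Y−X)` for `X, Y ∈ Γ ∩ Q_{r₀}(X₀)`;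
in particular `Γ ∩ Q_{r₀}(X₀)` is a graph over its projection. -/
theorem projection_nondegeneracy (n : ℕ)
    (d : EuclideanSpace ℝ (Fin n) × ℝ → ℝ)
    (hd : ∀ Z : EuclideanSpace ℝ (Fin n) × ℝ, d Z = Real.sqrt (‖Z.1‖ ^ 2 + |Z.2|))
    (ω : ℝ → ℝ) (hωmono : Monotone ω)
    (Γ : Set (EuclideanSpace ℝ (Fin n) × ℝ))
    (p : EuclideanSpace ℝ (Fin n) × ℝ →
      (EuclideanSpace ℝ (Fin n) × ℝ) →ₗ[ℝ] (EuclideanSpace ℝ (Fin n) × ℝ))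
    (h1 : ∀ X ∈ Γ, ∀ Y ∈ Γ, d (Y - X - p X (Y - X)) ≤ d (Y - X) * ω (d (Y - X)))
    (h2 : ∀ X ∈ Γ, ∀ Y ∈ Γ, ∀ Z : EuclideanSpace ℝ (Fin n) × ℝ,
      d (p Y Z - p X Z) ≤ d Z * ω (d (Y - X)))
    (X₀ : EuclideanSpace ℝ (Fin n) × ℝ) (hX₀ : X₀ ∈ Γ)
    (r₀ : ℝ) (hr₀ : 0 < r₀) (hω : ω (2 * Real.sqrt 2 * r₀) ≤ 1/4) :
    ∀ X ∈ Γ, ∀ Y ∈ Γ,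
      ‖X.1 - X₀.1‖ < r₀ → |X.2 - X₀.2| < r₀ ^ 2 →
      ‖Y.1 - X₀.1‖ < r₀ → |Y.2 - X₀.2| < r₀ ^ 2 →
      (1/2) * d (Y - X) ≤ d (p X₀ (Y - X)) := by
  intro X hX Y hY hX1 hX2 hY1 hY2
  have dnn : ∀ Z, 0 ≤ d Z := fun Z => (hd Z) ▸ Real.sqrt_nonneg _
  have hR : (0:ℝ) ≤ 2 * Real.sqrt 2 * r₀ := by positivity
  have hRsq : (2 * Real.sqrt 2 * r₀) ^ 2 = 8 * r₀ ^ 2 := by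
    have : Real.sqrt 2 ^ 2 = 2 := Real.sq_sqrt (by norm_num)
    nlinarith
  -- d(Y - X) ≤ 2√2 r₀
  have hdYX : d (Y - X) ≤ 2 * Real.sqrt 2 * r₀ := by
    rw [hd]
    have h1' : ‖(Y - X).1‖ ≤ ‖Y.1 - X₀.1‖ + ‖X₀.1 - X.1‖ := by
      have : (Y - X).1 = (Y.1 - X₀.1) + (X₀.1 - X.1) := by simp
      rw [this]; exact norm_add_le _ _
    have hX1' : ‖X₀.1 - X.1‖ < r₀ := by rwa [norm_sub_rev]
    have h2' : |(Y - X).2| ≤ |Y.2 - X₀.2| + |X₀.2 - X.2| := by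
      have : (Y - X).2 = (Y.2 - X₀.2) + (X₀.2 - X.2) := by simp
      rw [this]; exact abs_add_le _ _
    have hX2' : |X₀.2 - X.2| < r₀ ^ 2 := by rwa [abs_sub_comm]
    have hn : ‖(Y - X).1‖ ≤ 2 * r₀ := by linarith
    have : ‖(Y - X).1‖ ^ 2 + |(Y - X).2| ≤ (2 * Real.sqrt 2 * r₀) ^ 2 := by
      have := pow_le_pow_left₀ (norm_nonneg (Y - X).1) hn 2
      rw [hRsq]; nlinarith
    calc Real.sqrt (‖(Y - X).1‖ ^ 2 + |(Y - X).2|)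
        ≤ Real.sqrt ((2 * Real.sqrt 2 * r₀) ^ 2) := Real.sqrt_le_sqrt this
      _ = 2 * Real.sqrt 2 * r₀ := Real.sqrt_sq hR
  -- d(X - X₀) ≤ 2√2 r₀
  have hdXX0 : d (X - X₀) ≤ 2 * Real.sqrt 2 * r₀ := by
    rw [hd]
    have : ‖(X - X₀).1‖ ^ 2 + |(X - X₀).2| ≤ (2 * Real.sqrt 2 * r₀) ^ 2 := by
      have h1' : ‖(X - X₀).1‖ < r₀ := by simpa [Prod.fst_sub] using hX1
      have h2' : |(X - X₀).2| < r₀ ^ 2 := by simpa using hX2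
      have := pow_le_pow_left₀ (norm_nonneg (X - X₀).1) h1'.le 2
      rw [hRsq]; nlinarith
    calc Real.sqrt (‖(X - X₀).1‖ ^ 2 + |(X - X₀).2|)
        ≤ Real.sqrt ((2 * Real.sqrt 2 * r₀) ^ 2) := Real.sqrt_le_sqrt this
      _ = 2 * Real.sqrt 2 * r₀ := Real.sqrt_sq hR
  have hω1 : ω (d (Y - X)) ≤ 1/4 := le_trans (hωmono hdYX) hω
  have hω2 : ω (d (X - X₀)) ≤ 1/4 := le_trans (hωmono hdXX0) hω
  -- bounds from h1, h2
  have hb1 : d (Y - X - p X (Y - X)) ≤ d (Y - X) * (1/4) :=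
    le_trans (h1 X hX Y hY) (mul_le_mul_of_nonneg_left hω1 (dnn _))
  have hb2 : d (p X (Y - X) - p X₀ (Y - X)) ≤ d (Y - X) * (1/4) :=
    le_trans (h2 X₀ hX₀ X hX (Y - X)) (mul_le_mul_of_nonneg_left hω2 (dnn _))
  -- triangle inequalities
  have tri1 : d (Y - X) ≤ d (Y - X - p X₀ (Y - X)) + d (p X₀ (Y - X)) := by
    have := d_subadd n d hd (Y - X - p X₀ (Y - X)) (p X₀ (Y - X))
    simpa using this
  have tri2 : d (Y - X - p X₀ (Y - X))
      ≤ d (Y - X - p X (Y - X)) + d (p X (Y - X) - p X₀ (Y - X)) := by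
    have := d_subadd n d hd (Y - X - p X (Y - X)) (p X (Y - X) - p X₀ (Y - X))
    have heq : Y - X - p X (Y - X) + (p X (Y - X) - p X₀ (Y - X))
        = Y - X - p X₀ (Y - X) := by abel
    rwa [heq] at this
  linarith
end

section
/- If σ : (0,1] → [0,∞) is nondecreasing, then ∫₀^τ (1/r) ∫₀^r (σ(s))²/s ds dr ≤ (∫₀^τ σ(s)/s ds)² for all τ ∈ (0,1]. In particular, if σ is Dini then the left-hand side is finite. -/
/-!
Since `σ` is nondecreasing, `σ(s)²/s ≤ σ(r) σ(s)/s` for `s ≤ r`, so the inner integral is at most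
`σ(r) ∫₀^τ σ(s)/s ds`; dividing by `r` and integrating in `r` then produces the square of the
Dini integral.
-/

open MeasureTheory Set ENNReal

section

variable {σ : ℝ → ℝ}

theorem lintegral_sq_div_le_mul_lintegral_div {r : ℝ} (hmono : MonotoneOn σ (Ioc 0 r))
    (hnn : ∀ s ∈ Ioc 0 r, 0 ≤ σ s) :
    ∫⁻ s in Ioc 0 r, ENNReal.ofReal (σ s ^ 2 / s) ≤
      ENNReal.ofReal (σ r) * ∫⁻ s in Ioc 0 r, ENNReal.ofReal (σ s / s) := by
  rw [← lintegral_const_mul' _ _ ofReal_ne_top]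
  refine setLIntegral_mono' measurableSet_Ioc fun s hs => ?_
  have hr : r ∈ Ioc 0 r := ⟨hs.1.trans_le hs.2, le_rfl⟩
  rw [← ENNReal.ofReal_mul (hnn r hr), sq, mul_div_assoc]
  exact ofReal_le_ofReal <|
    mul_le_mul_of_nonneg_right (hmono hs hr hs.2) (div_nonneg (hnn s hs) hs.1.le)

theorem lintegral_inv_mul_lintegral_sq_div_le {τ : ℝ} (hmono : MonotoneOn σ (Ioc 0 τ))
    (hnn : ∀ s ∈ Ioc 0 τ, 0 ≤ σ s) :
    ∫⁻ r in Ioc 0 τ, ENNReal.ofReal (1 / r) * ∫⁻ s in Ioc 0 r, ENNReal.ofReal (σ s ^ 2 / s) ≤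
      (∫⁻ s in Ioc 0 τ, ENNReal.ofReal (σ s / s)) ^ 2 := by
  set I := ∫⁻ s in Ioc 0 τ, ENNReal.ofReal (σ s / s)
  rcases eq_top_or_lt_top I with hI | hI
  · simp [hI]
  calc _ ≤ ∫⁻ r in Ioc 0 τ, ENNReal.ofReal (σ r / r) * I :=
        setLIntegral_mono' measurableSet_Ioc fun r hr => ?_
    _ = I ^ 2 := by rw [lintegral_mul_const' _ _ hI.ne, sq]
  have hsub : Ioc 0 r ⊆ Ioc 0 τ := Ioc_subset_Ioc_right hr.2
  have inner := lintegral_sq_div_le_mul_lintegral_div (hmono.mono hsub) fun s hs => hnn s (hsub hs)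
  calc ENNReal.ofReal (1 / r) * ∫⁻ s in Ioc 0 r, ENNReal.ofReal (σ s ^ 2 / s)
      ≤ ENNReal.ofReal (1 / r) * (ENNReal.ofReal (σ r) * I) := by
        gcongr
        exact inner.trans (by gcongr; exact lintegral_mono_set hsub)
    _ = ENNReal.ofReal (σ r / r) * I := by
        rw [← mul_assoc, ← ENNReal.ofReal_mul (one_div_nonneg.mpr hr.1.le), one_div_mul_eq_div]

end

/-- For a nondecreasing nonnegative `σ` on `(0,1]` one has
`∫₀^τ (1/r) ∫₀^r σ(s)²/s ds dr ≤ (∫₀^τ σ(s)/s ds)²` for `τ ∈ (0,1]`; in particular,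
if `σ` is Dini then the left-hand side is finite. -/
theorem double_integral_sigma_sq_le (σ : ℝ → ℝ)
    (hmono : MonotoneOn σ (Ioc (0:ℝ) 1))
    (hnn : ∀ s ∈ Ioc (0:ℝ) 1, 0 ≤ σ s) :
    ∀ τ ∈ Ioc (0:ℝ) 1,
      (∫⁻ r in Ioc (0:ℝ) τ, ENNReal.ofReal (1 / r) *
          ∫⁻ s in Ioc (0:ℝ) r, ENNReal.ofReal ((σ s) ^ 2 / s)) ≤
        (∫⁻ s in Ioc (0:ℝ) τ, ENNReal.ofReal (σ s / s)) ^ 2 ∧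
      ((∫⁻ s in Ioc (0:ℝ) 1, ENNReal.ofReal (σ s / s)) < ⊤ →
        (∫⁻ r in Ioc (0:ℝ) τ, ENNReal.ofReal (1 / r) *
          ∫⁻ s in Ioc (0:ℝ) r, ENNReal.ofReal ((σ s) ^ 2 / s)) < ⊤) := by
  intro τ hτ
  have hsub : Ioc 0 τ ⊆ Ioc 0 1 := Ioc_subset_Ioc_right hτ.2
  have key := lintegral_inv_mul_lintegral_sq_div_le (hmono.mono hsub) fun s hs => hnn s (hsub hs)
  exact ⟨key, fun hdini => key.trans_lt (pow_lt_top ((lintegral_mono_set hsub).trans_lt hdini))⟩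
end
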